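/- The following 2×2 matrices over K satisfy the B₂ affine Hecke relations and give an irreducible representation (every invariant K-subspace of K² is 0 or K²): X₁ = diag(−p⁻¹, p), X₂ = diag(p, −p⁻¹), T₁ with rows [(q²−1)/((p²+1)q), (p²+q²)(1+p²q²)/((p²+1)²q²)], [1, p²(q²−1)/((p²+1)q)], T₂ = diag(p, −p⁻¹). (This is the 2-dimensional calibrated composition factor U_c³ of Ind_{Ĥ₂}^{Ĥ} ρ₁ᶜ.) -/

import Mathlib

set_option maxHeartbeats 2000000
set_option synthInstance.maxHeartbeats 400000

noncomputable section

/-- `K = ℂ(p,q)`, the field of rational functions in two indeterminates over `ℂ`. -/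
abbrev K : Type := FractionRing (MvPolynomial (Fin 2) ℂ)

/-- The indeterminate `p ∈ K`. -/
def pp : K := algebraMap (MvPolynomial (Fin 2) ℂ) K (MvPolynomial.X 0)

/-- The indeterminate `q ∈ K`. -/
def qq : K := algebraMap (MvPolynomial (Fin 2) ℂ) K (MvPolynomial.X 1)

/-- A quadruple of `n × n` matrices over `K` satisfies the `B₂` affine Hecke relations
(with parameters `p`, `q`). -/
def HeckeRel {n : ℕ} (p q : K) (T₁ T₂ X₁ X₂ : Matrix (Fin n) (Fin n) K) : Prop :=
  IsUnit X₁ ∧ IsUnit X₂ ∧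
  (T₁ - q • 1) * (T₁ + q⁻¹ • 1) = 0 ∧
  (T₂ - p • 1) * (T₂ + p⁻¹ • 1) = 0 ∧
  T₁ * T₂ * T₁ * T₂ = T₂ * T₁ * T₂ * T₁ ∧
  T₁ * X₂ * T₁ = X₁ ∧
  T₂ * X₂⁻¹ * T₂ = X₂ ∧
  T₂ * X₁ = X₁ * T₂ ∧
  X₁ * X₂ = X₂ * X₁

/-- Irreducibility: the only `K`-subspaces of `Kⁿ` invariant under all four matrices
are `0` and `Kⁿ`. -/
def IsIrredRep {n : ℕ} (T₁ T₂ X₁ X₂ : Matrix (Fin n) (Fin n) K) : Prop :=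
  ∀ U : Submodule K (Fin n → K),
    (∀ v ∈ U, T₁.mulVec v ∈ U) → (∀ v ∈ U, T₂.mulVec v ∈ U) →
    (∀ v ∈ U, X₁.mulVec v ∈ U) → (∀ v ∈ U, X₂.mulVec v ∈ U) →
    U = ⊥ ∨ U = ⊤

/-- `X₁` of `U_c³`. -/
def X1c : Matrix (Fin 2) (Fin 2) K := !![-pp⁻¹, 0; 0, pp]

/-- `X₂` of `U_c³`. -/
def X2c : Matrix (Fin 2) (Fin 2) K := !![pp, 0; 0, -pp⁻¹]

/-- `T₁` of `U_c³`. -/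
def T1c : Matrix (Fin 2) (Fin 2) K :=
  !![(qq ^ 2 - 1) / ((pp ^ 2 + 1) * qq),
     (pp ^ 2 + qq ^ 2) * (1 + pp ^ 2 * qq ^ 2) / ((pp ^ 2 + 1) ^ 2 * qq ^ 2);
     1, pp ^ 2 * (qq ^ 2 - 1) / ((pp ^ 2 + 1) * qq)]

/-- `T₂` of `U_c³`. -/
def T2c : Matrix (Fin 2) (Fin 2) K := !![pp, 0; 0, -pp⁻¹]

/-! ### Auxiliary generic development over an arbitrary field -/

section Generic
variable {F : Type*} [Field F] (p q : F)

/-- Polynomial numerator matrix of `T₁`: `T₁ = ((p²+1)²q²)⁻¹ • gN`. -/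
def gN : Matrix (Fin 2) (Fin 2) F :=
  !![(q ^ 2 - 1) * ((p ^ 2 + 1) * q), (p ^ 2 + q ^ 2) * (1 + p ^ 2 * q ^ 2);
     (p ^ 2 + 1) ^ 2 * q ^ 2, p ^ 2 * (q ^ 2 - 1) * ((p ^ 2 + 1) * q)]

/-- Polynomial numerator matrix of `X₂`: `X₂ = p⁻¹ • gM`. -/
def gM : Matrix (Fin 2) (Fin 2) F := !![p ^ 2, 0; 0, -1]

/-- Polynomial numerator matrix of `X₁`: `X₁ = p⁻¹ • gM'`. -/
def gM' : Matrix (Fin 2) (Fin 2) F := !![-1, 0; 0, p ^ 2]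

def gX1 : Matrix (Fin 2) (Fin 2) F := !![-p⁻¹, 0; 0, p]
def gX2 : Matrix (Fin 2) (Fin 2) F := !![p, 0; 0, -p⁻¹]
def gT1 : Matrix (Fin 2) (Fin 2) F :=
  !![(q ^ 2 - 1) / ((p ^ 2 + 1) * q),
     (p ^ 2 + q ^ 2) * (1 + p ^ 2 * q ^ 2) / ((p ^ 2 + 1) ^ 2 * q ^ 2);
     1, p ^ 2 * (q ^ 2 - 1) / ((p ^ 2 + 1) * q)]

variable (hp : p ≠ 0) (hq : q ≠ 0) (h1 : p ^ 2 + 1 ≠ 0)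

lemma hc (hq : q ≠ 0) (h1 : p ^ 2 + 1 ≠ 0) : ((p ^ 2 + 1) ^ 2 * q ^ 2 : F) ≠ 0 :=
  mul_ne_zero (pow_ne_zero _ h1) (pow_ne_zero _ hq)

include hq h1 in
lemma hT1 : gT1 p q = ((p ^ 2 + 1) ^ 2 * q ^ 2 : F)⁻¹ • gN p q := by
  have h := hc p q hq h1
  have h2 : ((p ^ 2 + 1) * q : F) ≠ 0 := mul_ne_zero h1 hq
  ext i j
  fin_cases i <;> fin_cases j <;>
    simp [gT1, gN] <;> field_simp <;> (first | ring1 | (left; ring1) | tauto)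

include hp in
lemma hX1 : gX1 p = (p⁻¹ : F) • gM' p := by
  ext i j
  fin_cases i <;> fin_cases j <;> simp [gX1, gM'] <;> field_simp <;> ring

include hp in
lemma hX2 : gX2 p = (p⁻¹ : F) • gM p := by
  ext i j
  fin_cases i <;> fin_cases j <;> simp [gX2, gM] <;> field_simp <;> ring

include hq h1 in
lemma grel1 : (gT1 p q - q • 1) * (gT1 p q + q⁻¹ • 1) = 0 := by
  set c : F := ((p ^ 2 + 1) ^ 2 * q ^ 2 : F)⁻¹ with hcdef
  have hc0 := hc p q hq h1
  have e1 : gT1 p q - q • 1 = c • (gN p q - ((p ^ 2 + 1) ^ 2 * q ^ 3) • 1) := by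
    rw [hT1 p q hq h1, smul_sub, smul_smul]
    congr 2
    rw [hcdef]; field_simp
  have e2 : gT1 p q + q⁻¹ • 1 = c • (gN p q + ((p ^ 2 + 1) ^ 2 * q) • 1) := by
    rw [hT1 p q hq h1, smul_add, smul_smul]
    congr 2
    rw [hcdef]; field_simp
  have key : (gN p q - ((p ^ 2 + 1) ^ 2 * q ^ 3) • 1) * (gN p q + ((p ^ 2 + 1) ^ 2 * q) • 1)
      = (0 : Matrix (Fin 2) (Fin 2) F) := by
    ext i j
    fin_cases i <;> fin_cases j <;>
      simp [gN, Matrix.mul_apply, Fin.sum_univ_two, Matrix.one_apply] <;> ring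
  rw [e1, e2, smul_mul_assoc, mul_smul_comm, key, smul_zero, smul_zero]

include hp in
lemma grel2 : (gX2 p - p • 1) * (gX2 p + p⁻¹ • 1) = 0 := by
  have e1 : gX2 p - p • 1 = (p⁻¹ : F) • (gM p - (p ^ 2) • 1) := by
    rw [hX2 p hp, smul_sub, smul_smul]
    congr 2
    field_simp
  have e2 : gX2 p + p⁻¹ • 1 = (p⁻¹ : F) • (gM p + 1) := by
    rw [hX2 p hp, smul_add]
  have key : (gM p - (p ^ 2) • 1) * (gM p + 1) = (0 : Matrix (Fin 2) (Fin 2) F) := by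
    ext i j
    fin_cases i <;> fin_cases j <;>
      simp [gM, Matrix.mul_apply, Fin.sum_univ_two, Matrix.one_apply] <;> ring
  rw [e1, e2, smul_mul_assoc, mul_smul_comm, key, smul_zero, smul_zero]

include hp hq h1 in
lemma gbraid : gT1 p q * gX2 p * gT1 p q * gX2 p = gX2 p * gT1 p q * gX2 p * gT1 p q := by
  have key : gN p q * gM p * gN p q * gM p = gM p * gN p q * gM p * gN p q := by
    ext i j
    fin_cases i <;> fin_cases j <;>
      simp [gN, gM, Matrix.mul_apply, Fin.sum_univ_two] <;> ring
  rw [hT1 p q hq h1, hX2 p hp]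
  simp only [smul_mul_assoc, mul_smul_comm, smul_smul]
  rw [key]
  congr 1
  ring

include hp hq h1 in
lemma grel4 : gT1 p q * gX2 p * gT1 p q = gX1 p := by
  have hc0 := hc p q hq h1
  have key : gN p q * gM p * gN p q = ((p ^ 2 + 1) ^ 4 * q ^ 4 : F) • gM' p := by
    ext i j
    fin_cases i <;> fin_cases j <;>
      simp [gN, gM, gM', Matrix.mul_apply, Fin.sum_univ_two] <;> ring
  rw [hT1 p q hq h1, hX2 p hp, hX1 p hp]
  simp only [smul_mul_assoc, mul_smul_comm, smul_smul]
  rw [key, smul_smul]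
  congr 1
  field_simp

include hp in
lemma gX2inv : (gX2 p)⁻¹ = !![p⁻¹, 0; 0, -p] := by
  apply Matrix.inv_eq_right_inv
  ext i j
  fin_cases i <;> fin_cases j <;>
    simp [gX2, Matrix.mul_apply, Fin.sum_univ_two, Matrix.one_apply] <;>
    field_simp

include hp in
lemma grel5 : gX2 p * (gX2 p)⁻¹ * gX2 p = gX2 p := by
  rw [gX2inv p hp]
  ext i j
  fin_cases i <;> fin_cases j <;>
    simp [gX2, Matrix.mul_apply, Fin.sum_univ_two] <;>
    field_simp

lemma grel6 : gX2 p * gX1 p = gX1 p * gX2 p := by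
  ext i j
  fin_cases i <;> fin_cases j <;>
    simp [gX1, gX2, Matrix.mul_apply, Fin.sum_univ_two] <;> ring

include hp in
lemma ghu1 : IsUnit (gX1 p : Matrix (Fin 2) (Fin 2) F) := by
  rw [Matrix.isUnit_iff_isUnit_det]
  have : (gX1 p : Matrix (Fin 2) (Fin 2) F).det = -1 := by
    simp [gX1, Matrix.det_fin_two_of]
    field_simp
  rw [this]
  exact IsUnit.neg isUnit_one

include hp in
lemma ghu2 : IsUnit (gX2 p : Matrix (Fin 2) (Fin 2) F) := by
  rw [Matrix.isUnit_iff_isUnit_det]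
  have : (gX2 p : Matrix (Fin 2) (Fin 2) F).det = -1 := by
    simp [gX2, Matrix.det_fin_two_of]
    field_simp
  rw [this]
  exact IsUnit.neg isUnit_one

/-! ### Irreducibility, generically -/

lemma gvec_decomp (x : Fin 2 → F) : x = x 0 • ![(1 : F), 0] + x 1 • ![(0 : F), 1] := by
  funext i
  fin_cases i <;> simp

include hp hq h1 in
lemma ge1_of_e0 (h2 : p ^ 2 + q ^ 2 ≠ 0) (h3 : 1 + p ^ 2 * q ^ 2 ≠ 0)
    (U : Submodule F (Fin 2 → F))
    (hT : ∀ v ∈ U, (gT1 p q).mulVec v ∈ U) (h0 : ![(1 : F), 0] ∈ U) :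
    ![(0 : F), 1] ∈ U := by
  have hw : (gT1 p q).mulVec ![(1 : F), 0] ∈ U := hT _ h0
  have hww : (gT1 p q).mulVec ![(1 : F), 0]
      - ((q ^ 2 - 1) / ((p ^ 2 + 1) * q)) • ![(1 : F), 0] = ![(0 : F), 1] := by
    funext i
    fin_cases i <;>
      simp [gT1, Matrix.mulVec, dotProduct, Fin.sum_univ_two]
  rw [← hww]
  exact sub_mem hw (U.smul_mem _ h0)

include hp hq h1 in
lemma ge0_of_e1 (h2 : p ^ 2 + q ^ 2 ≠ 0) (h3 : 1 + p ^ 2 * q ^ 2 ≠ 0)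
    (U : Submodule F (Fin 2 → F))
    (hT : ∀ v ∈ U, (gT1 p q).mulVec v ∈ U) (h0 : ![(0 : F), 1] ∈ U) :
    ![(1 : F), 0] ∈ U := by
  set b : F := (p ^ 2 + q ^ 2) * (1 + p ^ 2 * q ^ 2) / ((p ^ 2 + 1) ^ 2 * q ^ 2) with hbdef
  have hb : b ≠ 0 := by
    rw [hbdef]
    exact div_ne_zero (mul_ne_zero h2 h3) (hc p q hq h1)
  have hw : (gT1 p q).mulVec ![(0 : F), 1] ∈ U := hT _ h0
  have hmv : (gT1 p q).mulVec ![(0 : F), 1]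
      - (p ^ 2 * (q ^ 2 - 1) / ((p ^ 2 + 1) * q)) • ![(0 : F), 1] = b • ![(1 : F), 0] := by
    funext i
    fin_cases i <;>
      simp [gT1, Matrix.mulVec, dotProduct, Fin.sum_univ_two,
        Matrix.vecHead, Matrix.vecTail, hbdef]
  have hmem : b • ![(1 : F), 0] ∈ U := by
    rw [← hmv]
    exact sub_mem hw (U.smul_mem _ h0)
  have := U.smul_mem b⁻¹ hmem
  rwa [inv_smul_smul₀ hb] at this

include hp h1 in
lemma ge0_or_e1 (U : Submodule F (Fin 2 → F))
    (hX : ∀ v ∈ U, (gX2 p).mulVec v ∈ U)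
    (v : Fin 2 → F) (hvU : v ∈ U) (hv0 : v ≠ 0) :
    ![(1 : F), 0] ∈ U ∨ ![(0 : F), 1] ∈ U := by
  by_cases hv : v 0 = 0
  · right
    have hv1 : v 1 ≠ 0 := by
      intro h
      apply hv0
      funext i
      fin_cases i <;> simp [hv, h]
    have : (v 1)⁻¹ • v = ![(0 : F), 1] := by
      funext i
      fin_cases i <;> simp [hv] <;> field_simp
    rw [← this]
    exact U.smul_mem _ hvU
  · left
    have hw : (gX2 p).mulVec v + p⁻¹ • v ∈ U :=
      add_mem (hX _ hvU) (U.smul_mem _ hvU)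
    have hpp : (p + p⁻¹) * v 0 ≠ 0 := by
      apply mul_ne_zero _ hv
      intro h
      apply h1
      have : p * (p + p⁻¹) = p ^ 2 + 1 := by field_simp
      rw [← this, h, mul_zero]
    have hmv : (gX2 p).mulVec v + p⁻¹ • v = ((p + p⁻¹) * v 0) • ![(1 : F), 0] := by
      funext i
      fin_cases i <;>
        simp [gX2, Matrix.mulVec, dotProduct, Fin.sum_univ_two,
          Matrix.vecHead, Matrix.vecTail] <;> ring
    rw [hmv] at hw
    have := U.smul_mem ((p + p⁻¹) * v 0)⁻¹ hw
    rwa [inv_smul_smul₀ hpp] at this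

include hp hq h1 in
lemma girred (h2 : p ^ 2 + q ^ 2 ≠ 0) (h3 : 1 + p ^ 2 * q ^ 2 ≠ 0)
    (U : Submodule F (Fin 2 → F))
    (hT : ∀ v ∈ U, (gT1 p q).mulVec v ∈ U)
    (hX : ∀ v ∈ U, (gX2 p).mulVec v ∈ U) :
    U = ⊥ ∨ U = ⊤ := by
  by_cases hU : U = ⊥
  · exact Or.inl hU
  right
  obtain ⟨v, hvU, hv0⟩ := Submodule.exists_mem_ne_zero_of_ne_bot hU
  have key : ![(1 : F), 0] ∈ U ∧ ![(0 : F), 1] ∈ U := by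
    rcases ge0_or_e1 p hp h1 U hX v hvU hv0 with h | h
    · exact ⟨h, ge1_of_e0 p q hp hq h1 h2 h3 U hT h⟩
    · exact ⟨ge0_of_e1 p q hp hq h1 h2 h3 U hT h, h⟩
  rw [Submodule.eq_top_iff']
  intro x
  rw [gvec_decomp x]
  exact add_mem (U.smul_mem _ key.1) (U.smul_mem _ key.2)

end Generic

/-! ### Nonvanishing of the needed denominators in `K` -/

lemma kkey (f : MvPolynomial (Fin 2) ℂ)
    (h : MvPolynomial.aeval (![2, 3] : Fin 2 → ℂ) f ≠ 0) :
    (algebraMap (MvPolynomial (Fin 2) ℂ) K f) ≠ 0 := by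
  intro heq
  have hf : f = 0 := by
    apply IsFractionRing.injective (MvPolynomial (Fin 2) ℂ) K
    simpa using heq
  simp [hf] at h

lemma hp : pp ≠ 0 := by
  apply kkey
  simp

lemma hq : qq ≠ 0 := by
  apply kkey
  simp

lemma h1 : pp ^ 2 + 1 ≠ 0 := by
  have : pp ^ 2 + 1 = algebraMap (MvPolynomial (Fin 2) ℂ) K (MvPolynomial.X 0 ^ 2 + 1) := by
    simp [pp]
  rw [this]
  apply kkey
  simp; norm_num

lemma h2 : pp ^ 2 + qq ^ 2 ≠ 0 := by
  have : pp ^ 2 + qq ^ 2 = algebraMap (MvPolynomial (Fin 2) ℂ) K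
      (MvPolynomial.X 0 ^ 2 + MvPolynomial.X 1 ^ 2) := by simp [pp, qq]
  rw [this]; apply kkey; simp; norm_num

lemma h3 : 1 + pp ^ 2 * qq ^ 2 ≠ 0 := by
  have : 1 + pp ^ 2 * qq ^ 2 = algebraMap (MvPolynomial (Fin 2) ℂ) K
      (1 + MvPolynomial.X 0 ^ 2 * MvPolynomial.X 1 ^ 2) := by simp [pp, qq]
  rw [this]; apply kkey; simp; norm_num

lemma T1c_eq : T1c = gT1 pp qq := rfl
lemma T2c_eq : T2c = gX2 pp := rfl
lemma X1c_eq : X1c = gX1 pp := rfl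
lemma X2c_eq : X2c = gX2 pp := rfl

/-- `U_c³` satisfies the `B₂` affine Hecke relations and is irreducible. -/
theorem Uc3_relations_and_irreducible :
    HeckeRel pp qq T1c T2c X1c X2c ∧ IsIrredRep T1c T2c X1c X2c := by
  constructor
  · refine ⟨?_, ?_, ?_, ?_, ?_, ?_, ?_, ?_, ?_⟩
    · rw [X1c_eq]; exact ghu1 pp hp
    · rw [X2c_eq]; exact ghu2 pp hp
    · rw [T1c_eq]; exact grel1 pp qq hq h1
    · rw [T2c_eq]; exact grel2 pp hp
    · rw [T1c_eq, T2c_eq]; exact gbraid pp qq hp hq h1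
    · rw [T1c_eq, X1c_eq, X2c_eq]; exact grel4 pp qq hp hq h1
    · rw [T2c_eq, X2c_eq]; exact grel5 pp hp
    · rw [T2c_eq, X1c_eq]; exact grel6 pp
    · rw [X1c_eq, X2c_eq]; exact (grel6 pp).symm
  · intro U hT1U hT2U hX1U hX2U
    rw [T1c_eq] at hT1U
    rw [X2c_eq] at hX2U
    exact girred pp qq hp hq h1 h2 h3 U hT1U hX2U
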